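/- arXiv:2404.08841 — 4 statements merged into one kernel-verified Lean document; each statement's English description precedes it below -/
import Mathlib

section
/- Let V be a variety of Ω-algebras of a type without nullary operation symbols. Then each algebra in V has precisely one idempotent element if and only if V is polarized. -/
structure Signature where
  symbols : Type
  arity : symbols → ℕ

structure Alg (S : Signature) where
  carrier : Type
  op : ∀ ω : S.symbols, (Fin (S.arity ω) → carrier) → carrier
  nonempty : Nonempty carrier

inductive Term (S : Signature) (X : Type) : Type
  | var : X → Term S X
  | app : ∀ ω : S.symbols, (Fin (S.arity ω) → Term S X) → Term S X

def Term.eval {S : Signature} {X : Type} (A : Alg S) (env : X → A.carrier) :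
    Term S X → A.carrier
  | .var x => env x
  | .app ω ts => A.op ω fun i => (ts i).eval A env

/-- The algebra `A` satisfies the identity `u = v`. -/
def Alg.sat {S : Signature} (A : Alg S) {X : Type} (u v : Term S X) : Prop :=
  ∀ env : X → A.carrier, u.eval A env = v.eval A env

/-- An identity: a pair of terms in the countably many variables `x₀, x₁, …`. -/
abbrev Ident (S : Signature) := Term S ℕ × Term S ℕ

/-- `A` lies in the variety axiomatized by the set of identities `E`. -/
def Alg.Models {S : Signature} (A : Alg S) (E : Set (Ident S)) : Prop :=
  ∀ e ∈ E, A.sat e.1 e.2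

/-- The identity `u = v` holds in the variety axiomatized by `E`. -/
def Conseq {S : Signature} (E : Set (Ident S)) {X : Type} (u v : Term S X) : Prop :=
  ∀ A : Alg S, A.Models E → A.sat u v

/-- `a` is an idempotent element of `A`. -/
def Alg.IsIdem {S : Signature} (A : Alg S) (a : A.carrier) : Prop :=
  ∀ ω : S.symbols, A.op ω (fun _ => a) = a

/-- `B` is (the universe of) a subalgebra of `A`. -/
def Alg.IsSubuniverse {S : Signature} (A : Alg S) (B : Set A.carrier) : Prop :=
  ∀ ω (a : Fin (S.arity ω) → A.carrier), (∀ i, a i ∈ B) → A.op ω a ∈ B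

/-- The subalgebra of `A` on a nonempty subuniverse `B`. -/
def Alg.subAlg {S : Signature} (A : Alg S) (B : Set A.carrier)
    (h : A.IsSubuniverse B) (hne : B.Nonempty) : Alg S where
  carrier := B
  op ω a := ⟨A.op ω fun i => (a i : A.carrier), h ω _ fun i => (a i).2⟩
  nonempty := hne.to_subtype

/-- A congruence of `A`: an equivalence relation compatible with all operations. -/
structure Congruence {S : Signature} (A : Alg S) where
  rel : A.carrier → A.carrier → Prop
  iseqv : Equivalence rel
  compat : ∀ ω (a b : Fin (S.arity ω) → A.carrier),
    (∀ i, rel (a i) (b i)) → rel (A.op ω a) (A.op ω b)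

def Congruence.setoid {S : Signature} {A : Alg S} (θ : Congruence A) :
    Setoid A.carrier := ⟨θ.rel, θ.iseqv⟩

/-- The quotient algebra `A/θ`. -/
noncomputable def Alg.quot {S : Signature} (A : Alg S) (θ : Congruence A) : Alg S where
  carrier := Quotient θ.setoid
  op ω q := Quotient.mk θ.setoid (A.op ω fun i => (q i).out)
  nonempty := A.nonempty.map (Quotient.mk θ.setoid)

/-- Membership in the Mal'tsev product of the varieties axiomatized by `V` and `W`:
`A` has a congruence `θ` with `A/θ` in (the variety of) `W` such that every
`θ`-class which is a subalgebra of `A` is an algebra in (the variety of) `V`. -/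
def InMaltsev {S : Signature} (V W : Set (Ident S)) (A : Alg S) : Prop :=
  ∃ θ : Congruence A, (A.quot θ).Models W ∧
    ∀ a : A.carrier, ∀ h : A.IsSubuniverse {b | θ.rel a b},
      (A.subAlg {b | θ.rel a b} h ⟨a, θ.iseqv.refl a⟩).Models V

/-- A class of algebras is a variety iff it is axiomatized by some set of identities. -/
def IsVarietyClass {S : Signature} (K : Alg S → Prop) : Prop :=
  ∃ E : Set (Ident S), ∀ A : Alg S, K A ↔ A.Models E

def TermIdem {S : Signature} (E : Set (Ident S)) {X : Type} (t : Term S X) : Prop :=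
  ∀ ω : S.symbols, Conseq E (Term.app ω fun _ => t) t

/-- The variety axiomatized by `E` is polarized: there is a unary term idempotent
whose induced operation is constant on every member of the variety. -/
def Polarized {S : Signature} (E : Set (Ident S)) : Prop :=
  ∃ t : Term S Unit, TermIdem E t ∧
    ∀ A : Alg S, A.Models E → ∀ a b : A.carrier,
      t.eval A (fun _ => a) = t.eval A (fun _ => b)


/-!
If `t` is a unary term idempotent that is constant on `V`, then in every `A ∈ V` the pole
`t(a)` is idempotent, and any idempotent `e` equals `t(e)`, hence the pole. Conversely, the
idempotent of the free algebra on one generator `x` is the class of a term `t(x)` which is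
then a term idempotent of `V`; in the free algebra on two generators `x, y` both `t(x)` and
`t(y)` are idempotent, so uniqueness forces the identity `t(x) = t(y)`, i.e. `t` is constant.
-/

variable {S : Signature}

namespace Term

def subst_s2 {X Y : Type} (σ : X → Term S Y) : Term S X → Term S Y
  | .var x => σ x
  | .app ω ts => .app ω fun i => subst_s2 σ (ts i)

theorem eval_subst {X Y : Type} (A : Alg S) (env : Y → A.carrier) (σ : X → Term S Y)
    (u : Term S X) : (u.subst_s2 σ).eval A env = u.eval A fun x => (σ x).eval A env := by
  induction u with
  | var x => rfl
  | app ω ts ih => simp only [subst_s2, eval, ih]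

theorem eval_const_of_isIdem {X : Type} {A : Alg S} {a : A.carrier} (ha : A.IsIdem a)
    (t : Term S X) : t.eval A (fun _ => a) = a := by
  induction t with
  | var x => rfl
  | app ω ts ih =>
    show A.op ω (fun i => (ts i).eval A fun _ => a) = a
    simp only [ih]
    exact ha ω

end Term

namespace Conseq

variable {V : Set (Ident S)} {X : Type}

theorem trans {u v w : Term S X} (h₁ : Conseq V u v) (h₂ : Conseq V v w) : Conseq V u w :=
  fun A hA env => (h₁ A hA env).trans (h₂ A hA env)

theorem subst_s2 {Y : Type} (σ : X → Term S Y) {u v : Term S X} (h : Conseq V u v) :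
    Conseq V (u.subst_s2 σ) (v.subst_s2 σ) := by
  intro A hA env
  rw [Term.eval_subst, Term.eval_subst]
  exact h A hA _

theorem app (ω : S.symbols) {f g : Fin (S.arity ω) → Term S X}
    (h : ∀ i, Conseq V (f i) (g i)) : Conseq V (.app ω f) (.app ω g) := by
  intro A hA env
  exact congrArg (A.op ω) (funext fun i => h i A hA env)

end Conseq

theorem TermIdem.subst_s2 {V : Set (Ident S)} {X Y : Type} {t : Term S X} (ht : TermIdem V t)
    (σ : X → Term S Y) : TermIdem V (t.subst_s2 σ) :=
  fun ω => (ht ω).subst_s2 σ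

def freeSetoid (V : Set (Ident S)) (X : Type) : Setoid (Term S X) where
  r u v := Conseq V u v
  iseqv :=
    ⟨fun _ _ _ _ => rfl, fun h A hA env => (h A hA env).symm, Conseq.trans⟩

noncomputable def Alg.free (V : Set (Ident S)) (X : Type) [h : Nonempty X] : Alg S where
  carrier := Quotient (freeSetoid V X)
  op ω qs := Quotient.mk _ (.app ω fun i => (qs i).out)
  nonempty := h.map fun x => Quotient.mk _ (.var x)

namespace freeSetoid

variable (V : Set (Ident S)) {X : Type}

theorem mk_eq_mk_iff {u v : Term S X} :
    Quotient.mk (freeSetoid V X) u = Quotient.mk _ v ↔ Conseq V u v :=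
  Quotient.eq

theorem conseq_out (u : Term S X) : Conseq V (Quotient.mk (freeSetoid V X) u).out u :=
  (mk_eq_mk_iff V).1 (Quotient.out_eq _)

end freeSetoid

namespace Alg.free

open freeSetoid

variable (V : Set (Ident S)) {X : Type} [Nonempty X]

theorem op_mk (ω : S.symbols) (f : Fin (S.arity ω) → Term S X) :
    (free V X).op ω (fun i => Quotient.mk _ (f i)) = Quotient.mk _ (.app ω f) :=
  Quotient.sound (Conseq.app ω fun i => conseq_out V (f i))

theorem eval_eq_mk_subst {Y : Type} (env : Y → (free V X).carrier) (u : Term S Y) :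
    u.eval (free V X) env = Quotient.mk _ (u.subst_s2 fun y => (env y).out) := by
  induction u with
  | var y => exact (Quotient.out_eq _).symm
  | app ω ts ih =>
    show (free V X).op ω (fun i => (ts i).eval (free V X) env) = _
    simp only [ih, op_mk]
    rfl

theorem models : (free V X).Models V := by
  intro e he env
  rw [eval_eq_mk_subst, eval_eq_mk_subst]
  exact Quotient.sound (Conseq.subst_s2 _ fun A hA => hA e he)

theorem isIdem_mk_iff {t : Term S X} :
    (free V X).IsIdem (Quotient.mk _ t) ↔ TermIdem V t := by
  simp only [Alg.IsIdem, TermIdem, op_mk]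
  exact forall_congr' fun ω => mk_eq_mk_iff V

end Alg.free

theorem Polarized.existsUnique_isIdem {V : Set (Ident S)} (hV : Polarized V) (A : Alg S)
    (hA : A.Models V) : ∃! a : A.carrier, A.IsIdem a := by
  obtain ⟨t, ht, hconst⟩ := hV
  obtain ⟨a₀⟩ := A.nonempty
  refine ⟨t.eval A fun _ => a₀, fun ω => ht ω A hA _, fun a ha => ?_⟩
  calc a = t.eval A fun _ => a := (Term.eval_const_of_isIdem ha t).symm
    _ = t.eval A fun _ => a₀ := hconst A hA a a₀

theorem polarized_of_existsUnique_isIdem {V : Set (Ident S)}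
    (H : ∀ A : Alg S, A.Models V → ∃! a : A.carrier, A.IsIdem a) : Polarized V := by
  obtain ⟨q, hq, -⟩ := H (Alg.free V Unit) (Alg.free.models V)
  obtain ⟨t, rfl⟩ := Quotient.exists_rep q
  have ht : TermIdem V t := (Alg.free.isIdem_mk_iff V).1 hq
  let tAt (b : Bool) : Term S Bool := t.subst_s2 fun _ => .var b
  have hpoles : Conseq V (tAt true) (tAt false) := by
    obtain ⟨_, -, huniq⟩ := H (Alg.free V Bool) (Alg.free.models V)
    have hidem (b : Bool) : (Alg.free V Bool).IsIdem (Quotient.mk _ (tAt b)) :=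
      (Alg.free.isIdem_mk_iff V).2 (ht.subst_s2 _)
    exact (freeSetoid.mk_eq_mk_iff V).1 ((huniq _ (hidem true)).trans (huniq _ (hidem false)).symm)
  refine ⟨t, ht, fun A hA a b => ?_⟩
  simpa only [tAt, Term.eval_subst, Term.eval, cond_true, cond_false] using
    hpoles A hA fun c => cond c a b

theorem stmt_2_general (S : Signature)
    (V : Set (Ident S)) :
    (∀ A : Alg S, A.Models V → ∃! a : A.carrier, A.IsIdem a) ↔ Polarized V :=
  ⟨polarized_of_existsUnique_isIdem, Polarized.existsUnique_isIdem⟩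

/-- Each algebra in the variety `V` has precisely one idempotent
element iff `V` is polarized. -/
theorem stmt_2 (S : Signature) (h0 : ∀ ω : S.symbols, 0 < S.arity ω)
    (V : Set (Ident S)) :
    (∀ A : Alg S, A.Models V → ∃! a : A.carrier, A.IsIdem a) ↔ Polarized V :=
  stmt_2_general S V
end

section
/- Let V and W be varieties of Ω-algebras of the same type without nullary operation symbols, and let Σ be any set of identities true in V. Then every algebra in the Mal'tsev product V ∘ W satisfies all the identities in Σ^p. -/
def Term.subst {S : Signature} {X Y : Type} (f : X → Term S Y) :
    Term S X → Term S Y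
  | .var x => f x
  | .app ω ts => .app ω fun i => (ts i).subst f

/-- The set `σᵖ` of identities obtained from the identity `σ` by substituting for
its variables pairwise `W`-equivalent term idempotents of (the variety of) `W`. -/
def sigmaP {S : Signature} (W : Set (Ident S)) (σ : Ident S) : Set (Ident S) :=
  { e | ∃ r : ℕ → Term S ℕ,
      (∀ i j : ℕ, Conseq W (r i) (r j)) ∧
      (∀ ω : S.symbols, Conseq W (Term.app ω fun _ => r 0) (r 0)) ∧
      e = (σ.1.subst r, σ.2.subst r) }

/-- `Σᵖ = ⋃_{σ ∈ Σ} σᵖ`. -/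
def SigmaP {S : Signature} (W : Set (Ident S)) (Sg : Set (Ident S)) :
    Set (Ident S) :=
  ⋃ σ ∈ Sg, sigmaP W σ

/-
Let `A ∈ V ∘ W` via the congruence `θ` and take pairwise `W`-equivalent term idempotents
`r₀, r₁, …` of `W`. Since `A/θ ∈ W`, under any assignment the values of the `rᵢ` in `A` all lie
in one `θ`-class, and that class is idempotent in `A/θ`. An idempotent class of a congruence is a
subuniverse, so it is a subalgebra of `A` lying in `V`; there `σ` holds at the values of the
`rᵢ`, which is exactly the instance `σ(r₀, r₁, …)` of `σᵖ` evaluated in `A`.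
-/

lemma Term.eval_subst_s3 {S : Signature} {X Y : Type} (A : Alg S) (f : X → Term S Y)
    (t : Term S X) (env : Y → A.carrier) :
    (t.subst f).eval A env = t.eval A (fun x => (f x).eval A env) := by
  induction t with
  | var x => rfl
  | app ω ts ih => exact congrArg (A.op ω) (funext ih)

lemma Term.eval_subAlg {S : Signature} (A : Alg S) (B : Set A.carrier)
    (h : A.IsSubuniverse B) (hne : B.Nonempty) {X : Type} (t : Term S X) (env : X → B) :
    (t.eval (A.subAlg B h hne) env).1 = t.eval A (fun x => (env x).1) := by
  induction t with
  | var x => rfl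
  | app ω ts ih => exact congrArg (A.op ω) (funext ih)

lemma Alg.sat.eval_eq_of_subAlg {S : Signature} {A : Alg S} {B : Set A.carrier}
    {h : A.IsSubuniverse B} {hne : B.Nonempty} {X : Type} {u v : Term S X}
    (huv : (A.subAlg B h hne).sat u v) (env : X → A.carrier) (henv : ∀ x, env x ∈ B) :
    u.eval A env = v.eval A env := by
  have := congrArg Subtype.val (huv fun x => ⟨env x, henv x⟩)
  rwa [Term.eval_subAlg, Term.eval_subAlg] at this

namespace Congruence

variable {S : Signature} {A : Alg S} (θ : Congruence A)

lemma quot_op_mk (ω : S.symbols) (a : Fin (S.arity ω) → A.carrier) :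
    (A.quot θ).op ω (fun i => Quotient.mk θ.setoid (a i))
      = Quotient.mk θ.setoid (A.op ω a) :=
  Quotient.sound <| θ.compat ω _ _ fun _ => Quotient.exact (s := θ.setoid) (Quotient.out_eq _)

lemma eval_quot_mk {X : Type} (t : Term S X) (env : X → A.carrier) :
    t.eval (A.quot θ) (fun x => Quotient.mk θ.setoid (env x))
      = Quotient.mk θ.setoid (t.eval A env) := by
  induction t with
  | var x => rfl
  | app ω ts ih =>
    simp only [Term.eval, ih]
    exact θ.quot_op_mk ω _

lemma rel_eval_of_conseq {W : Set (Ident S)} (hW : (A.quot θ).Models W) {X : Type}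
    {u v : Term S X} (huv : Conseq W u v) (env : X → A.carrier) :
    θ.rel (u.eval A env) (v.eval A env) := by
  have := huv _ hW fun x => Quotient.mk θ.setoid (env x)
  rw [eval_quot_mk, eval_quot_mk] at this
  exact Quotient.exact (s := θ.setoid) this

lemma isSubuniverse_class_of_isIdem {a : A.carrier}
    (ha : (A.quot θ).IsIdem (Quotient.mk θ.setoid a)) :
    A.IsSubuniverse {b | θ.rel a b} := by
  intro ω b hb
  have hclass : (fun i => Quotient.mk θ.setoid (b i)) = fun _ => Quotient.mk θ.setoid a :=
    funext fun i => (Quotient.sound (hb i)).symm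
  apply Quotient.exact (s := θ.setoid)
  rw [← θ.quot_op_mk, hclass, ha ω]

end Congruence

theorem stmt_3_general (S : Signature)
    (V W : Set (Ident S)) (Sg : Set (Ident S))
    (hSg : ∀ σ ∈ Sg, Conseq V σ.1 σ.2) :
    ∀ A : Alg S, InMaltsev V W A → A.Models (SigmaP W Sg) := by
  rintro A ⟨θ, hW, hV⟩ e he env
  simp only [SigmaP, Set.mem_iUnion] at he
  obtain ⟨σ, hσ, r, hr_equiv, hr_idem, rfl⟩ := he
  set a : ℕ → A.carrier := fun n => (r n).eval A env
  have ha_idem : (A.quot θ).IsIdem (Quotient.mk θ.setoid (a 0)) := fun ω => by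
    have := θ.rel_eval_of_conseq hW (hr_idem ω) env
    exact (θ.quot_op_mk ω _).trans (Quotient.sound this)
  have hsub := θ.isSubuniverse_class_of_isIdem ha_idem
  have hσV := hSg σ hσ _ (hV (a 0) hsub)
  show (σ.1.subst r).eval A env = (σ.2.subst r).eval A env
  rw [Term.eval_subst_s3, Term.eval_subst_s3]
  exact hσV.eval_eq_of_subAlg a fun n => θ.rel_eval_of_conseq hW (hr_equiv 0 n) env

/-- If `Σ` is any set of identities true in the variety `V`, then
every algebra in the Mal'tsev product `V ∘ W` satisfies all identities in `Σᵖ`. -/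
theorem stmt_3 (S : Signature) (h0 : ∀ ω : S.symbols, 0 < S.arity ω)
    (V W : Set (Ident S)) (Sg : Set (Ident S))
    (hSg : ∀ σ ∈ Sg, Conseq V σ.1 σ.2) :
    ∀ A : Alg S, InMaltsev V W A → A.Models (SigmaP W Sg) :=
  stmt_3_general S V W Sg hSg
end

section
/- Let V and W be varieties of Ω-algebras of the same type without nullary operation symbols. If not every algebra in W contains an idempotent element, then the variety H(V ∘ W) generated by the Mal'tsev product V ∘ W does not depend on V and coincides with the variety of all Ω-algebras of that type. -/
namespace Alg

variable {S : Signature}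

def IsHom (A B : Alg S) (f : A.carrier → B.carrier) : Prop :=
  ∀ ω (a : Fin (S.arity ω) → A.carrier), f (A.op ω a) = B.op ω (f ∘ a)

theorem IsHom.map_eval {A B : Alg S} {f : A.carrier → B.carrier} (hf : IsHom A B f)
    {X : Type} (t : Term S X) (env : X → A.carrier) :
    f (t.eval A env) = t.eval B (f ∘ env) := by
  induction t with
  | var x => rfl
  | app ω ts ih => exact (hf ω _).trans (congrArg (B.op ω) (funext ih))

theorem Models.of_injective_hom {A B : Alg S} {f : A.carrier → B.carrier} (hf : IsHom A B f)
    (hinj : Function.Injective f) {E : Set (Ident S)} (hB : B.Models E) : A.Models E :=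
  fun e he env => hinj <| by rw [hf.map_eval, hf.map_eval]; exact hB e he _

theorem sat.of_surjective_hom {A B : Alg S} {f : A.carrier → B.carrier} (hf : IsHom A B f)
    (hsurj : Function.Surjective f) {X : Type} {u v : Term S X} (hA : A.sat u v) :
    B.sat u v := by
  intro env
  obtain ⟨env', rfl⟩ : ∃ env', f ∘ env' = env := ⟨_, funext fun x => (hsurj (env x)).choose_spec⟩
  rw [← hf.map_eval, ← hf.map_eval, hA]

def prod (A B : Alg S) : Alg S where
  carrier := A.carrier × B.carrier
  op ω a := (A.op ω fun i => (a i).1, B.op ω fun i => (a i).2)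
  nonempty := A.nonempty.elim fun a => B.nonempty.elim fun b => ⟨(a, b)⟩

theorem isHom_fst (A B : Alg S) : IsHom (A.prod B) A Prod.fst := fun _ _ => rfl

theorem isHom_snd (A B : Alg S) : IsHom (A.prod B) B Prod.snd := fun _ _ => rfl

end Alg

namespace Congruence

variable {S : Signature} {A B : Alg S} {f : A.carrier → B.carrier}

def ker (hf : A.IsHom B f) : Congruence A where
  rel x y := f x = f y
  iseqv := ⟨fun _ => rfl, Eq.symm, Eq.trans⟩
  compat ω a b h := by rw [hf, hf]; exact congrArg (B.op ω) (funext h)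

def kerLift (hf : A.IsHom B f) : (A.quot (ker hf)).carrier → B.carrier :=
  Quotient.lift f fun _ _ h => h

theorem kerLift_injective (hf : A.IsHom B f) : Function.Injective (kerLift hf) := by
  rintro ⟨x⟩ ⟨y⟩ h
  exact Quotient.sound h

theorem isHom_kerLift (hf : A.IsHom B f) : (A.quot (ker hf)).IsHom B (kerLift hf) := by
  intro ω q
  show f _ = _
  rw [hf]
  congr 1
  funext i
  exact congrArg (kerLift hf) (Quotient.out_eq (q i))

theorem quot_ker_models (hf : A.IsHom B f) {E : Set (Ident S)} (hB : B.Models E) :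
    (A.quot (ker hf)).Models E :=
  Alg.Models.of_injective_hom (isHom_kerLift hf) (kerLift_injective hf) hB

theorem isIdem_of_isSubuniverse_ker_class (hf : A.IsHom B f) {a : A.carrier}
    (h : A.IsSubuniverse {b | (ker hf).rel a b}) : B.IsIdem (f a) := fun ω =>
  (hf ω fun _ => a).symm.trans (h ω (fun _ => a) fun _ => rfl).symm

end Congruence

/-- Witnessed by the kernel of `A × B → B`: its quotient is `B`, and none of its classes
`A × {b}` is a subalgebra because `b` is not idempotent. -/
theorem inMaltsev_prod_of_no_idem {S : Signature} (V W : Set (Ident S)) (A : Alg S) {B : Alg S}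
    (hBW : B.Models W) (hB : ¬ ∃ b : B.carrier, B.IsIdem b) : InMaltsev V W (A.prod B) :=
  ⟨Congruence.ker (Alg.isHom_snd A B), Congruence.quot_ker_models _ hBW,
    fun _ h => (hB ⟨_, Congruence.isIdem_of_isSubuniverse_ker_class _ h⟩).elim⟩

theorem stmt_7_general (S : Signature)
    (W : Set (Ident S))
    (hW : ∃ B : Alg S, B.Models W ∧ ¬ ∃ b : B.carrier, B.IsIdem b) :
    ∀ (V : Set (Ident S)) (A : Alg S) (u v : Term S ℕ),
      (∀ B : Alg S, InMaltsev V W B → B.sat u v) → A.sat u v := by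
  obtain ⟨B, hBW, hB⟩ := hW
  intro V A u v huv
  obtain ⟨b⟩ := B.nonempty
  exact Alg.sat.of_surjective_hom (Alg.isHom_fst A B) (fun a => ⟨(a, b), rfl⟩)
    (huv _ (inMaltsev_prod_of_no_idem V W A hBW hB))

/-- If not every algebra in the variety `W` contains an
idempotent element, then the variety generated by the Mal'tsev product `V ∘ W`
does not depend on `V` and coincides with the variety of all Ω-algebras: every
algebra satisfies every identity true throughout `V ∘ W`, for every `V`. -/
theorem stmt_7 (S : Signature) (h0 : ∀ ω : S.symbols, 0 < S.arity ω)
    (W : Set (Ident S))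
    (hW : ∃ B : Alg S, B.Models W ∧ ¬ ∃ b : B.carrier, B.IsIdem b) :
    ∀ (V : Set (Ident S)) (A : Alg S) (u v : Term S ℕ),
      (∀ B : Alg S, InMaltsev V W B → B.sat u v) → A.sat u v :=
  stmt_7_general S W hW
end

section
/- Let W be a variety and A an Ω-algebra of the same similarity type as the algebras in W. Define the binary relation ϱ⁰ on A by: (a,b) ∈ ϱ⁰ if and only if there exist an identity p(x₁,…,x_n) = q(x₁,…,x_n) true in W and elements d₁,…,d_n ∈ A such that a = p(d₁,…,d_n) and b = q(d₁,…,d_n). Then the W-replica congruence ϱ of A coincides with the transitive closure tr(ϱ⁰) of ϱ⁰. -/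
/-- The relation `ϱ⁰`: `(a, b) ∈ ϱ⁰` iff there are an identity `p = q` true in
the variety axiomatized by `W` and elements `d₁, d₂, …` of `A` such that
`a = p(d₁,…,dₙ)` and `b = q(d₁,…,dₙ)`. -/
def rho0 {S : Signature} (W : Set (Ident S)) (A : Alg S)
    (a b : A.carrier) : Prop :=
  ∃ (p q : Term S ℕ) (d : ℕ → A.carrier),
    Conseq W p q ∧ a = p.eval A d ∧ b = q.eval A d

/-
Every congruence `θ` with `A/θ ∈ W` contains `ϱ⁰`, because the identities of `W` hold in
`A/θ`; hence it contains `tr(ϱ⁰)`. Conversely `tr(ϱ⁰)` is itself such a congruence. `ϱ⁰` is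
reflexive and compatible: finitely many instances `pᵢ(dᵢ) ϱ⁰ qᵢ(dᵢ)` merge into the single
instance `ω(p₁,…) ϱ⁰ ω(q₁,…)` once the variables of the `i`-th identity are renamed apart.
The transitive closure of a reflexive compatible relation is compatible (change one argument
at a time), and each identity of `W` holds in `A/tr(ϱ⁰)` by construction.
-/

theorem Relation.TransGen.pi_lift {α β : Type*} {R : α → α → Prop} {T : β → β → Prop}
    (hR : ∀ x, R x x) :
    ∀ {n : ℕ} (F : (Fin n → α) → β), (∀ a b, (∀ i, R (a i) (b i)) → T (F a) (F b)) →
      ∀ a b, (∀ i, Relation.TransGen R (a i) (b i)) → Relation.TransGen T (F a) (F b)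
  | 0, F, hF, a, b, _ => .single (hF a b fun i => i.elim0)
  | n + 1, F, hF, a, b, hab => by
    have head : Relation.TransGen T (F (Fin.cons (a 0) (Fin.tail a)))
        (F (Fin.cons (b 0) (Fin.tail a))) :=
      Relation.TransGen.lift (fun x => F (Fin.cons x (Fin.tail a)))
        (fun x y hxy => hF _ _ (Fin.cases hxy fun i => hR _)) _ _ (hab 0)
    have tail : Relation.TransGen T (F (Fin.cons (b 0) (Fin.tail a)))
        (F (Fin.cons (b 0) (Fin.tail b))) :=
      pi_lift hR (fun xs => F (Fin.cons (b 0) xs))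
        (fun xs ys hxy => hF _ _ (Fin.cases (hR _) hxy)) _ _ fun i => hab i.succ
    simpa only [Fin.cons_self_tail] using head.trans tail

namespace Term

variable {S : Signature}

def rename {X Y : Type} (f : X → Y) : Term S X → Term S Y
  | .var x => .var (f x)
  | .app ω ts => .app ω fun i => (ts i).rename f

theorem eval_rename {X Y : Type} (A : Alg S) (f : X → Y) (env : Y → A.carrier)
    (t : Term S X) : (t.rename f).eval A env = t.eval A (env ∘ f) := by
  induction t with
  | var x => rfl
  | app ω ts ih => exact congrArg (A.op ω) (funext ih)

theorem mk_eval {X : Type} (A : Alg S) (θ : Congruence A) (d : X → A.carrier)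
    (t : Term S X) :
    Quotient.mk θ.setoid (t.eval A d) = t.eval (A.quot θ) (Quotient.mk θ.setoid ∘ d) := by
  induction t with
  | var x => rfl
  | app ω ts ih =>
    exact Quotient.sound (θ.compat ω _ _ fun i =>
      θ.iseqv.symm (Quotient.exact ((Quotient.out_eq _).trans (ih i).symm)))

end Term

theorem Conseq.rename {S : Signature} {E : Set (Ident S)} {X Y : Type} {p q : Term S X}
    (h : Conseq E p q) (f : X → Y) : Conseq E (p.rename f) (q.rename f) := by
  intro B hB env
  rw [Term.eval_rename, Term.eval_rename]
  exact h B hB _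

section rho0

variable {S : Signature} {W : Set (Ident S)} {A : Alg S}

theorem rho0_of_conseq {X : Type} [Countable X] {p q : Term S X} (hpq : Conseq W p q)
    (d : X → A.carrier) : rho0 W A (p.eval A d) (q.eval A d) := by
  obtain ⟨f, hf⟩ := Countable.exists_injective_nat X
  let d' : ℕ → A.carrier := Function.extend f d fun _ => Classical.choice A.nonempty
  have hd' : d' ∘ f = d := Function.extend_comp hf d _
  refine ⟨p.rename f, q.rename f, d', hpq.rename f, ?_, ?_⟩ <;> rw [Term.eval_rename, hd']

theorem rho0_refl (a : A.carrier) : rho0 W A a a :=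
  ⟨.var 0, .var 0, fun _ => a, fun _ _ _ => rfl, rfl, rfl⟩

theorem rho0_symm {a b : A.carrier} (h : rho0 W A a b) : rho0 W A b a :=
  let ⟨p, q, d, hpq, ha, hb⟩ := h
  ⟨q, p, d, fun B hB env => (hpq B hB env).symm, hb, ha⟩

theorem rho0_op {ω : S.symbols} (a b : Fin (S.arity ω) → A.carrier)
    (hab : ∀ i, rho0 W A (a i) (b i)) : rho0 W A (A.op ω a) (A.op ω b) := by
  choose p q d hpq ha hb using hab
  have hconseq : Conseq W (.app ω fun i => (p i).rename (Prod.mk i))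
      (.app ω fun i => (q i).rename (Prod.mk i)) := fun B hB env =>
    congrArg (B.op ω) (funext fun i => (hpq i).rename (Prod.mk i) B hB env)
  have key := rho0_of_conseq hconseq fun x => d x.1 x.2
  simp only [Term.eval, Term.eval_rename] at key
  convert key using 2 <;> ext i
  exacts [ha i, hb i]

theorem transGen_rho0_symm {a b : A.carrier} (h : Relation.TransGen (rho0 W A) a b) :
    Relation.TransGen (rho0 W A) b a :=
  Relation.transGen_swap.1 (Relation.TransGen.mono (fun _ _ => rho0_symm) _ _ h)

theorem rho0_le_of_models (θ : Congruence A) (hθ : (A.quot θ).Models W) :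
    rho0 W A ≤ θ.rel := by
  intro a b h
  obtain ⟨p, q, d, hpq, rfl, rfl⟩ := h
  apply Quotient.exact (s := θ.setoid)
  rw [Term.mk_eval, Term.mk_eval]
  exact hpq _ hθ _

end rho0

def rho0TransGenCongruence {S : Signature} (W : Set (Ident S)) (A : Alg S) : Congruence A where
  rel := Relation.TransGen (rho0 W A)
  iseqv := ⟨fun a => .single (rho0_refl a), transGen_rho0_symm, .trans⟩
  compat ω := Relation.TransGen.pi_lift rho0_refl (A.op ω) rho0_op

theorem models_quot_rho0TransGenCongruence {S : Signature} (W : Set (Ident S)) (A : Alg S) :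
    (A.quot (rho0TransGenCongruence W A)).Models W := by
  intro e he env
  obtain ⟨d, rfl⟩ : ∃ d, Quotient.mk _ ∘ d = env := ⟨_, funext fun k => Quotient.out_eq (env k)⟩
  exact (Term.mk_eval A _ d e.1).symm.trans <|
    (Quotient.sound (Relation.TransGen.single (rho0_of_conseq (fun B hB => hB e he) d))).trans
      (Term.mk_eval A _ d e.2)

theorem stmt_10_general (S : Signature)
    (W : Set (Ident S)) (A : Alg S) (a b : A.carrier) :
    (∀ θ : Congruence A, (A.quot θ).Models W → θ.rel a b) ↔
      Relation.TransGen (rho0 W A) a b := by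
  refine ⟨fun h => h _ (models_quot_rho0TransGenCongruence W A), fun h θ hθ => ?_⟩
  have : IsTrans A.carrier θ.rel := ⟨fun _ _ _ => θ.iseqv.trans⟩
  exact Relation.transGen_minimal (rho0_le_of_models θ hθ) _ _ h

/-- The `W`-replica congruence of `A` (the intersection of all
congruences `θ` of `A` with `A/θ ∈ W`) coincides with the transitive closure of
`ϱ⁰`. -/
theorem stmt_10 (S : Signature) (h0 : ∀ ω : S.symbols, 0 < S.arity ω)
    (W : Set (Ident S)) (A : Alg S) (a b : A.carrier) :
    (∀ θ : Congruence A, (A.quot θ).Models W → θ.rel a b) ↔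
      Relation.TransGen (rho0 W A) a b :=
  stmt_10_general S W A a b
end
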